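/- arXiv:2308.11360 — 2 statements merged into one kernel-verified Lean document; each statement's English description precedes it below -/
import Mathlib

section
/- Let R be a commutative ring with 2 = 0 and let A be a commutative (not necessarily associative) R-algebra. Suppose A has a direct sum decomposition A = A₀ ⊕ A₁ (as R-modules) with A₀·A₀ ⊆ A₀, A₁·A₁ ⊆ A₀, and A₀·A₁ ⊆ A₁. Then every idempotent element of A lies in A₀. -/
/-! In characteristic 2 the cross terms of `(x + y) * (x + y)` cancel, so squaring is additive;
writing `b = x + y` with `x ∈ A₀`, `y ∈ A₁` gives `b = b * b = x * x + y * y ∈ A₀`. -/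

theorem add_self_eq_zero_of_two_eq_zero {R M : Type*} [Semiring R] [AddCommMonoid M]
    [Module R M] (h2 : (2 : R) = 0) (a : M) : a + a = 0 := by
  rw [← two_smul R a, h2, zero_smul]

theorem add_mul_self_eq_of_two_eq_zero {R A : Type*} [Semiring R]
    [NonUnitalNonAssocCommSemiring A] [Module R A] (h2 : (2 : R) = 0) (x y : A) :
    (x + y) * (x + y) = x * x + y * y := by
  calc (x + y) * (x + y) = x * x + y * y + (x * y + x * y) := by
        rw [add_mul, mul_add, mul_add, mul_comm y x]; abel
    _ = x * x + y * y := by rw [add_self_eq_zero_of_two_eq_zero h2, add_zero]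

theorem mul_self_mem_of_codisjoint {R A : Type*} [Semiring R]
    [NonUnitalNonAssocCommSemiring A] [Module R A] (h2 : (2 : R) = 0)
    {A0 A1 : Submodule R A} (hcod : Codisjoint A0 A1)
    (h00 : ∀ u ∈ A0, ∀ v ∈ A0, u * v ∈ A0) (h11 : ∀ u ∈ A1, ∀ v ∈ A1, u * v ∈ A0)
    (b : A) : b * b ∈ A0 := by
  obtain ⟨x, y, hx, hy, rfl⟩ := Submodule.codisjoint_iff_exists_add_eq.mp hcod b
  rw [add_mul_self_eq_of_two_eq_zero h2]
  exact A0.add_mem (h00 x hx x hx) (h11 y hy y hy)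

theorem stmt0_general {R A : Type*} [CommRing R] [NonUnitalNonAssocCommRing A]
    [Module R A]
    (h2 : (2 : R) = 0)
    (A0 A1 : Submodule R A) (hcompl : IsCompl A0 A1)
    (h00 : ∀ u ∈ A0, ∀ v ∈ A0, u * v ∈ A0)
    (h11 : ∀ u ∈ A1, ∀ v ∈ A1, u * v ∈ A0)
    (b : A) (hb : b * b = b) :
    b ∈ A0 := by
  rw [← hb]
  exact mul_self_mem_of_codisjoint h2 hcompl.codisjoint h00 h11 b

/-- If `R` is a commutative ring with `2 = 0` and `A` is a commutative
(not necessarily associative) `R`-algebra with a `ℤ/2ℤ`-graded direct sum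
decomposition `A = A₀ ⊕ A₁`, then every idempotent of `A` lies in `A₀`. -/
theorem stmt0 {R A : Type*} [CommRing R] [NonUnitalNonAssocCommRing A]
    [Module R A] [SMulCommClass R A A] [IsScalarTower R A A]
    (h2 : (2 : R) = 0)
    (A0 A1 : Submodule R A) (hcompl : IsCompl A0 A1)
    (h00 : ∀ u ∈ A0, ∀ v ∈ A0, u * v ∈ A0)
    (h11 : ∀ u ∈ A1, ∀ v ∈ A1, u * v ∈ A0)
    (h01 : ∀ u ∈ A0, ∀ v ∈ A1, u * v ∈ A1)
    (b : A) (hb : b * b = b) :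
    b ∈ A0 :=
  stmt0_general h2 A0 A1 hcompl h00 h11 b hb
end

section
/- Let A be the nilpotent Matsuo algebra of the affine plane of order 3 over a field of characteristic 2, and let ℓ = {a₁,a₂,a₃} be a line, with m and n the two other lines in the parallel class of ℓ. Then the 0-eigenspace of ad_{s_ℓ} is span{a₁,a₂,a₃,s} (where s is the sum of all 9 points), the 1-eigenspace is the 4-dimensional space spanned by b_i + b_j and c_i + c_j for points b_i ∈ m, c_i ∈ n, and the generalized 0-eigenspace is span{a₁,a₂,a₃,s_m,s_n}; in particular ad_{s_ℓ} is not semisimple, and A is the direct sum of the generalized 0-eigenspace and the 1-eigenspace. -/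
/-- `A` is the nilpotent Matsuo algebra (char 2) of the geometry `(col, third)`,
with `e` the natural basis indexed by the points. -/
structure IsNilMatsuo (R : Type*) {A P : Type*} [CommRing R] [NonUnitalNonAssocCommRing A]
    [Module R A] (col : P → P → Prop) (third : P → P → P) (e : P → A) : Prop where
  char2 : (2 : R) = 0
  mul_same : ∀ p, e p * e p = 0
  mul_of_not_col : ∀ p q, p ≠ q → ¬ col p q → e p * e q = 0
  mul_of_col : ∀ p q, p ≠ q → col p q → e p * e q = e p + e q + e (third p q)

/-- Collinearity in the affine plane of order 3: any two distinct points. -/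
def APcol (u v : ZMod 3 × ZMod 3) : Prop := u ≠ v

/-- Third point on the line through two distinct points of the affine plane of order 3. -/
def APthird (u v : ZMod 3 × ZMod 3) : ZMod 3 × ZMod 3 := -(u + v)

/-! In the frame `(i, j) ↦ p + i • t + j • d` the lines parallel to `ℓ` are the rows
`{i} × ZMod 3`, and the frame preserves the Matsuo product because the third point `-(u + v)`
of a line is an affine combination of `u` and `v`. Write `r i` for the row sums, so that
`s_ℓ, s_m, s_n = r 0, r 1, r 2` and `S = r 0 + r 1 + r 2`. In characteristic 2 one finds
`r 0 · e (0, j) = 0` and `r 0 · e (i, j) = e (i, j) + r 0 + r (-i)` for `i ≠ 0`. Hence `ad_{s_ℓ}`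
kills the `e (0, j)` and `S`, sends `r 1` and `r 2` to `S ≠ 0`, and fixes `e (i, j) + e (i, j')`
for `i ≠ 0`. So `P = span {e (0, j), r 1, r 2}` lies in the generalized 0-eigenspace, the span `Q`
of the four sums lies in the 1-eigenspace, and `P ⊔ Q = ⊤`. Generalized eigenspaces for distinct
eigenvalues are independent, so both inclusions are equalities, and `9 ≤ dim P + dim Q ≤ 5 + 4`
gives `dim Q = 4`. -/

open Function Module Submodule

theorem eq_of_le_of_le_sup_of_disjoint {α : Type*} [Lattice α] [OrderBot α] [IsModularLattice α]
    {x y z : α} (hxz : x ≤ z) (hz : z ≤ x ⊔ y) (hzy : Disjoint z y) : z = x :=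
  calc z = (x ⊔ y) ⊓ z := (inf_eq_right.2 hz).symm
    _ = x ⊔ y ⊓ z := sup_inf_assoc_of_le y hxz
    _ = x := by rw [hzy.symm.eq_bot, sup_bot_eq]

theorem Submodule.finrank_eq_of_sup_eq_top {K V : Type*} [DivisionRing K] [AddCommGroup V]
    [Module K V] [FiniteDimensional K V] {P Q : Submodule K V} {m n : ℕ} (hPQ : P ⊔ Q = ⊤)
    (hP : finrank K P ≤ m) (hQ : finrank K Q ≤ n) (hV : finrank K V = m + n) :
    finrank K Q = n := by
  have h := Submodule.finrank_add_le_finrank_add_finrank P Q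
  rw [hPQ, finrank_top, hV] at h
  omega

theorem Module.Basis.sum_ne_zero {ι R M : Type*} [Fintype ι] [Nonempty ι] [Ring R] [Nontrivial R]
    [AddCommGroup M] [Module R M] (b : Basis ι R M) : ∑ i, b i ≠ 0 := fun h =>
  one_ne_zero <| Fintype.linearIndependent_iff.1 b.linearIndependent (fun _ => 1)
    (by simpa using h) (Classical.arbitrary ι)

theorem ZMod.sum_univ_three {M : Type*} [AddCommMonoid M] (f : ZMod 3 → M) :
    ∑ i, f i = f 0 + f 1 + f 2 :=
  Fin.sum_univ_three f

namespace Module.End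

variable {K V : Type*} [Field K] [AddCommGroup V] [Module K V] {f : End K V}

theorem genEigenspace_eq_of_sup_eq_top {μ ν : K} (hμν : μ ≠ ν) {r s : ℕ∞}
    {P Q : Submodule K V} (hP : P ≤ f.genEigenspace μ r) (hQ : Q ≤ f.genEigenspace ν s)
    (hPQ : P ⊔ Q = ⊤) : f.genEigenspace μ r = P :=
  eq_of_le_of_le_sup_of_disjoint hP (hPQ ▸ le_top)
    ((f.disjoint_genEigenspace hμν r s).mono_right hQ)

theorem eigenspace_eq_of_maxGenEigenspace_le_sup_span_singleton {μ : K} {R : Submodule K V}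
    {x : V} (hR : R ≤ f.eigenspace μ) (h : f.maxGenEigenspace μ ≤ R ⊔ K ∙ x)
    (hx : x ∉ f.eigenspace μ) : f.eigenspace μ = R :=
  eq_of_le_of_le_sup_of_disjoint hR (eigenspace_le_maxGenEigenspace.trans h)
    (disjoint_span_singleton_of_notMem hx)

end Module.End

namespace IsNilMatsuo

variable {R A P Q : Type*} [CommRing R] [NonUnitalNonAssocCommRing A] [Module R A]
  {col : P → P → Prop} {third : P → P → P} {e : P → A}

theorem add_self (hM : IsNilMatsuo R col third e) (x : A) : x + x = 0 := by
  rw [← two_smul R x, hM.char2, zero_smul]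

theorem comp (hM : IsNilMatsuo R col third e) {col' : Q → Q → Prop} {third' : Q → Q → Q}
    {φ : Q → P} (hφ : Injective φ) (hcol : ∀ u v, col (φ u) (φ v) ↔ col' u v)
    (hthird : ∀ u v, third (φ u) (φ v) = φ (third' u v)) :
    IsNilMatsuo R col' third' (e ∘ φ) where
  char2 := hM.char2
  mul_same u := hM.mul_same (φ u)
  mul_of_not_col u v huv h := hM.mul_of_not_col _ _ (hφ.ne huv) ((hcol u v).not.2 h)
  mul_of_col u v huv h := by
    simp only [comp_apply, hM.mul_of_col _ _ (hφ.ne huv) ((hcol u v).2 h), hthird]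

end IsNilMatsuo

namespace AP

theorem two_smul_eq_neg : ∀ x : ZMod 3 × ZMod 3, (2 : ZMod 3) • x = -x := by
  decide

theorem three_nsmul_eq_zero : ∀ x : ZMod 3 × ZMod 3, 3 • x = 0 := by
  decide

theorem eq_zero_of_smul_add_smul_eq_zero {d t : ZMod 3 × ZMod 3} (hd : d ≠ 0)
    (ht : t ∉ ({0, d, -d} : Set (ZMod 3 × ZMod 3))) (i j : ZMod 3) (h : i • t + j • d = 0) :
    i = 0 ∧ j = 0 := by
  simp only [Set.mem_insert_iff, Set.mem_singleton_iff, not_or] at ht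
  have key : ∀ d t : ZMod 3 × ZMod 3, d ≠ 0 → t ≠ 0 → t ≠ d → t ≠ -d →
      ∀ i j : ZMod 3, i • t + j • d = 0 → i = 0 ∧ j = 0 := by
    decide
  exact key d t hd ht.1 ht.2.1 ht.2.2 i j h

def affineFrame (p t d u : ZMod 3 × ZMod 3) : ZMod 3 × ZMod 3 :=
  p + u.1 • t + u.2 • d

theorem affineFrame_bijective (p : ZMod 3 × ZMod 3) {d t : ZMod 3 × ZMod 3} (hd : d ≠ 0)
    (ht : t ∉ ({0, d, -d} : Set (ZMod 3 × ZMod 3))) : Bijective (affineFrame p t d) := by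
  refine Finite.injective_iff_bijective.1 fun u v huv => ?_
  have h := eq_zero_of_smul_add_smul_eq_zero hd ht (u.1 - v.1) (u.2 - v.2) (by
    simp only [affineFrame] at huv
    rw [sub_smul, sub_smul]
    linear_combination huv)
  exact Prod.ext (sub_eq_zero.1 h.1) (sub_eq_zero.1 h.2)

theorem APthird_affineFrame (p t d u v : ZMod 3 × ZMod 3) :
    APthird (affineFrame p t d u) (affineFrame p t d v) = affineFrame p t d (APthird u v) := by
  simp only [APthird, affineFrame, Prod.fst_neg, Prod.snd_neg, Prod.fst_add, Prod.snd_add,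
    neg_smul, add_smul]
  linear_combination -three_nsmul_eq_zero p

def row {M : Type*} [AddCommMonoid M] (ε : ZMod 3 × ZMod 3 → M) (i : ZMod 3) : M :=
  ∑ j, ε (i, j)

theorem row_eq {M : Type*} [AddCommMonoid M] (ε : ZMod 3 × ZMod 3 → M) (i : ZMod 3) :
    row ε i = ε (i, 0) + ε (i, 1) + ε (i, 2) :=
  ZMod.sum_univ_three _

theorem sum_eq_row_add_row_add_row {M : Type*} [AddCommMonoid M] (ε : ZMod 3 × ZMod 3 → M) :
    ∑ u, ε u = row ε 0 + row ε 1 + row ε 2 := by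
  rw [Fintype.sum_prod_type, ZMod.sum_univ_three]
  rfl

theorem span_le_span_sup_span_singleton {R M : Type*} [CommRing R] [AddCommGroup M] [Module R M]
    (ε : ZMod 3 × ZMod 3 → M) :
    span R {ε (0, 0), ε (0, 1), ε (0, 2), row ε 1, row ε 2} ≤
      span R {ε (0, 0), ε (0, 1), ε (0, 2), ∑ u, ε u} ⊔ R ∙ row ε 1 := by
  set W := span R {ε (0, 0), ε (0, 1), ε (0, 2), ∑ u, ε u} ⊔ R ∙ row ε 1
  have hW : ∀ x ∈ ({ε (0, 0), ε (0, 1), ε (0, 2), ∑ u, ε u} : Set M), x ∈ W :=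
    fun x hx => mem_sup_left (subset_span hx)
  have hrow₁ : row ε 1 ∈ W := mem_sup_right (mem_span_singleton_self _)
  have hrow₂ : row ε 2 = ∑ u, ε u - (ε (0, 0) + ε (0, 1) + ε (0, 2)) - row ε 1 := by
    rw [sum_eq_row_add_row_add_row, row_eq ε 0]
    abel
  simp only [span_le, Set.insert_subset_iff, Set.singleton_subset_iff, SetLike.mem_coe]
  refine ⟨hW _ (by simp), hW _ (by simp), hW _ (by simp), hrow₁, ?_⟩
  rw [hrow₂]
  exact sub_mem (sub_mem (hW _ (by simp))
    (add_mem (add_mem (hW _ (by simp)) (hW _ (by simp))) (hW _ (by simp)))) hrow₁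

end AP

open AP

namespace IsNilMatsuo

variable {R A : Type*} [CommRing R] [NonUnitalNonAssocCommRing A] [Module R A]
  {ε : ZMod 3 × ZMod 3 → A}

theorem comp_affineFrame {e : ZMod 3 × ZMod 3 → A} (hM : IsNilMatsuo R APcol APthird e)
    (p : ZMod 3 × ZMod 3) {d t : ZMod 3 × ZMod 3} (hd : d ≠ 0)
    (ht : t ∉ ({0, d, -d} : Set (ZMod 3 × ZMod 3))) :
    IsNilMatsuo R APcol APthird (e ∘ affineFrame p t d) :=
  hM.comp (affineFrame_bijective p hd ht).injective
    (fun _ _ => (affineFrame_bijective p hd ht).injective.ne_iff) (APthird_affineFrame p t d)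

theorem mul_of_ne (hM : IsNilMatsuo R APcol APthird ε) {u v : ZMod 3 × ZMod 3} (h : u ≠ v) :
    ε u * ε v = ε u + ε v + ε (-(u + v)) :=
  hM.mul_of_col u v h h

theorem sum_const (hM : IsNilMatsuo R APcol APthird ε) (x : A) : ∑ _j : ZMod 3, x = x := by
  rw [ZMod.sum_univ_three, hM.add_self, zero_add]

theorem row_mul_self (hM : IsNilMatsuo R APcol APthird ε) (i j : ZMod 3) :
    row ε i * ε (i, j) = 0 := by
  have hne : ∀ j : ZMod 3, (i, 1 + j) ≠ (i, j) ∧ (i, 2 + j) ≠ (i, j) := by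
    revert i; decide
  have hthird : ∀ j : ZMod 3, -((i, 1 + j) + (i, j)) = (i, 2 + j) ∧
      -((i, 2 + j) + (i, j)) = (i, 1 + j) := by
    revert i; decide
  calc row ε i * ε (i, j) = ∑ s, ε (i, s + j) * ε (i, j) := by
        rw [row, Finset.sum_mul]
        exact (Equiv.sum_comp (Equiv.addRight j) (fun j' => ε (i, j') * ε (i, j))).symm
    _ = (ε (i, 1 + j) + ε (i, j) + ε (i, 2 + j)) + (ε (i, 1 + j) + ε (i, j) + ε (i, 2 + j)) := by
        rw [ZMod.sum_univ_three, zero_add, hM.mul_same, hM.mul_of_ne (hne j).1,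
          hM.mul_of_ne (hne j).2, (hthird j).1, (hthird j).2]
        abel
    _ = 0 := hM.add_self _

theorem row_mul_of_ne (hM : IsNilMatsuo R APcol APthird ε) {i i' : ZMod 3} (h : i ≠ i')
    (j : ZMod 3) : row ε i * ε (i', j) = row ε i + ε (i', j) + row ε (-(i + i')) := by
  have hne : ∀ j' : ZMod 3, (i, j') ≠ (i', j) := fun j' hj => h (congrArg Prod.fst hj)
  have hrow : ∑ j', ε (-(i + i'), -(j' + j)) = row ε (-(i + i')) :=
    Equiv.sum_comp ((Equiv.addRight j).trans (Equiv.neg _)) (fun j' => ε (-(i + i'), j'))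
  calc row ε i * ε (i', j) = ∑ j', (ε (i, j') + ε (i', j) + ε (-(i + i'), -(j' + j))) := by
        simp only [row, Finset.sum_mul, hM.mul_of_ne (hne _), Prod.mk_add_mk, Prod.neg_mk]
    _ = row ε i + ε (i', j) + row ε (-(i + i')) := by
        rw [Finset.sum_add_distrib, Finset.sum_add_distrib, hrow, hM.sum_const]
        rfl

theorem row_mul_row_of_ne (hM : IsNilMatsuo R APcol APthird ε) {i i' : ZMod 3} (h : i ≠ i') :
    row ε i * row ε i' = row ε i + row ε i' + row ε (-(i + i')) := by
  calc row ε i * row ε i' = ∑ j, (row ε i + ε (i', j) + row ε (-(i + i'))) := by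
        rw [show row ε i' = ∑ j, ε (i', j) from rfl, Finset.mul_sum]
        simp only [hM.row_mul_of_ne h]
    _ = row ε i + row ε i' + row ε (-(i + i')) := by
        rw [Finset.sum_add_distrib, Finset.sum_add_distrib, hM.sum_const, hM.sum_const]
        rfl

theorem row_mul_add_of_ne (hM : IsNilMatsuo R APcol APthird ε) {i i' : ZMod 3} (h : i ≠ i')
    (j j' : ZMod 3) : row ε i * (ε (i', j) + ε (i', j')) = ε (i', j) + ε (i', j') := by
  rw [mul_add, hM.row_mul_of_ne h, hM.row_mul_of_ne h]
  calc row ε i + ε (i', j) + row ε (-(i + i')) + (row ε i + ε (i', j') + row ε (-(i + i')))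
      = ε (i', j) + ε (i', j') + ((row ε i + row ε (-(i + i'))) +
          (row ε i + row ε (-(i + i')))) := by abel
    _ = ε (i', j) + ε (i', j') := by rw [hM.add_self, add_zero]

theorem row_mul_row_self (hM : IsNilMatsuo R APcol APthird ε) (i : ZMod 3) :
    row ε i * row ε i = 0 := by
  conv_lhs => rw [row, Finset.mul_sum]
  exact Finset.sum_eq_zero fun j _ => hM.row_mul_self i j

theorem row_zero_mul_row_one (hM : IsNilMatsuo R APcol APthird ε) :
    row ε 0 * row ε 1 = ∑ u, ε u := by
  rw [hM.row_mul_row_of_ne (by decide), sum_eq_row_add_row_add_row]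
  rfl

theorem row_zero_mul_row_two (hM : IsNilMatsuo R APcol APthird ε) :
    row ε 0 * row ε 2 = ∑ u, ε u := by
  rw [hM.row_mul_row_of_ne (by decide), sum_eq_row_add_row_add_row, add_right_comm]
  rfl

theorem row_zero_mul_sum (hM : IsNilMatsuo R APcol APthird ε) : row ε 0 * ∑ u, ε u = 0 := by
  rw [sum_eq_row_add_row_add_row, mul_add, mul_add,
    hM.row_mul_row_self, hM.row_zero_mul_row_one, hM.row_zero_mul_row_two, zero_add, hM.add_self]

theorem mem_of_row_mem (hM : IsNilMatsuo R APcol APthird ε) {W : Submodule R A} {i : ZMod 3}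
    (hrow : row ε i ∈ W) (h₁ : ε (i, 0) + ε (i, 1) ∈ W) (h₂ : ε (i, 0) + ε (i, 2) ∈ W)
    (j : ZMod 3) : ε (i, j) ∈ W := by
  have h₀ : ε (i, 0) ∈ W := by
    have : ε (i, 0) = row ε i + (ε (i, 0) + ε (i, 1)) + (ε (i, 0) + ε (i, 2)) :=
      calc ε (i, 0) = ε (i, 0) + (ε (i, 0) + ε (i, 0)) + (ε (i, 1) + ε (i, 1)) +
            (ε (i, 2) + ε (i, 2)) := by simp only [hM.add_self, add_zero]
        _ = _ := by rw [row_eq]; abel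
    rw [this]
    exact add_mem (add_mem hrow h₁) h₂
  fin_cases j
  · exact h₀
  · exact (by simpa using W.sub_mem h₁ h₀ : ε (i, 1) ∈ W)
  · exact (by simpa using W.sub_mem h₂ h₀ : ε (i, 2) ∈ W)

theorem span_sup_span_eq_top (ε : Basis (ZMod 3 × ZMod 3) R A)
    (hM : IsNilMatsuo R APcol APthird ε) :
    span R {ε (0, 0), ε (0, 1), ε (0, 2), row ε 1, row ε 2} ⊔
      span R {ε (1, 0) + ε (1, 1), ε (1, 0) + ε (1, 2), ε (2, 0) + ε (2, 1),
        ε (2, 0) + ε (2, 2)} = ⊤ := by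
  set W := span R {ε (0, 0), ε (0, 1), ε (0, 2), row ε 1, row ε 2} ⊔
    span R {ε (1, 0) + ε (1, 1), ε (1, 0) + ε (1, 2), ε (2, 0) + ε (2, 1), ε (2, 0) + ε (2, 2)}
  have hP : ∀ x ∈ ({ε (0, 0), ε (0, 1), ε (0, 2), row ε 1, row ε 2} : Set A), x ∈ W :=
    fun _ hx => mem_sup_left (subset_span hx)
  have hQ : ∀ x ∈ ({ε (1, 0) + ε (1, 1), ε (1, 0) + ε (1, 2), ε (2, 0) + ε (2, 1),
      ε (2, 0) + ε (2, 2)} : Set A), x ∈ W :=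
    fun _ hx => mem_sup_right (subset_span hx)
  rw [eq_top_iff, ← ε.span_eq, span_le]
  rintro _ ⟨⟨i, j⟩, rfl⟩
  fin_cases i
  · fin_cases j
    exacts [hP (ε (0, 0)) (by simp), hP (ε (0, 1)) (by simp), hP (ε (0, 2)) (by simp)]
  · exact hM.mem_of_row_mem (i := 1) (hP _ (by simp)) (hQ _ (by simp)) (hQ _ (by simp)) j
  · exact hM.mem_of_row_mem (i := 2) (hP _ (by simp)) (hQ _ (by simp)) (hQ _ (by simp)) j

end IsNilMatsuo

theorem IsNilMatsuo.eigenspaces_mulLeft_row_zero {k A : Type*} [Field k]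
    [NonUnitalNonAssocCommRing A] [Module k A] [SMulCommClass k A A] [IsScalarTower k A A]
    (ε : Basis (ZMod 3 × ZMod 3) k A) (hM : IsNilMatsuo k APcol APthird ε) :
    let f : End k A := LinearMap.mulLeft k (row ε 0)
    f.eigenspace 0 = span k {ε (0, 0), ε (0, 1), ε (0, 2), ∑ u, ε u} ∧
      f.eigenspace 1 = span k {ε (1, 0) + ε (1, 1), ε (1, 0) + ε (1, 2),
        ε (2, 0) + ε (2, 1), ε (2, 0) + ε (2, 2)} ∧
      finrank k (f.eigenspace 1) = 4 ∧
      f.maxGenEigenspace 0 = span k {ε (0, 0), ε (0, 1), ε (0, 2), row ε 1, row ε 2} ∧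
      f.maxGenEigenspace 0 ≠ f.eigenspace 0 ∧
      IsCompl (f.maxGenEigenspace 0) (f.eigenspace 1) := by
  intro f
  set S := ∑ u, ε u
  set P := span k {ε (0, 0), ε (0, 1), ε (0, 2), row ε 1, row ε 2}
  set Q := span k {ε (1, 0) + ε (1, 1), ε (1, 0) + ε (1, 2), ε (2, 0) + ε (2, 1),
    ε (2, 0) + ε (2, 2)}
  have hf0 (j : ZMod 3) : f (ε (0, j)) = 0 := hM.row_mul_self 0 j
  have hf1 : f (row ε 1) = S := hM.row_zero_mul_row_one
  have hf2 : f (row ε 2) = S := hM.row_zero_mul_row_two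
  have hfS : f S = 0 := hM.row_zero_mul_sum
  have hP : P ≤ f.maxGenEigenspace 0 := by
    have hker : ∀ x, f (f x) = 0 → x ∈ f.maxGenEigenspace 0 := fun x hx =>
      (End.mem_maxGenEigenspace f 0 x).2 ⟨2, by simpa [sq] using hx⟩
    simp only [P, span_le, Set.insert_subset_iff, Set.singleton_subset_iff, SetLike.mem_coe]
    refine ⟨hker _ ?_, hker _ ?_, hker _ ?_, hker _ ?_, hker _ ?_⟩ <;>
      simp only [hf0, hf1, hf2, hfS, map_zero]
  have hQ : Q ≤ f.eigenspace 1 := by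
    simp only [Q, span_le, Set.insert_subset_iff, Set.singleton_subset_iff, SetLike.mem_coe,
      End.mem_eigenspace_iff, one_smul]
    exact ⟨hM.row_mul_add_of_ne (by decide) _ _, hM.row_mul_add_of_ne (by decide) _ _,
      hM.row_mul_add_of_ne (by decide) _ _, hM.row_mul_add_of_ne (by decide) _ _⟩
  have hPQ : P ⊔ Q = ⊤ := hM.span_sup_span_eq_top
  have hmax : f.maxGenEigenspace 0 = P :=
    End.genEigenspace_eq_of_sup_eq_top zero_ne_one hP hQ hPQ
  have heig : f.eigenspace 1 = Q :=
    End.genEigenspace_eq_of_sup_eq_top one_ne_zero hQ hP (sup_comm P Q ▸ hPQ)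
  have hrow : row ε 1 ∉ f.eigenspace 0 := by
    rw [End.mem_eigenspace_iff, zero_smul, hf1]
    exact ε.sum_ne_zero
  refine ⟨?_, heig, ?_, hmax, fun h => hrow (h ▸ hP (subset_span (by simp))), ?_⟩
  · refine End.eigenspace_eq_of_maxGenEigenspace_le_sup_span_singleton ?_
      (hmax ▸ span_le_span_sup_span_singleton ε) hrow
    simp only [span_le, Set.insert_subset_iff, Set.singleton_subset_iff, SetLike.mem_coe,
      End.mem_eigenspace_iff, zero_smul]
    exact ⟨hf0 0, hf0 1, hf0 2, hfS⟩
  · classical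
    have := Module.Basis.finiteDimensional_of_finite ε
    refine heig ▸ finrank_eq_of_sup_eq_top hPQ (m := 5) ?_ ?_ (finrank_eq_card_basis ε)
    · exact (finrank_span_le_card ({ε (0, 0), ε (0, 1), ε (0, 2), row ε 1, row ε 2} : Set A)).trans
        (by simpa using Finset.card_le_five)
    · exact (finrank_span_le_card ({ε (1, 0) + ε (1, 1), ε (1, 0) + ε (1, 2),
        ε (2, 0) + ε (2, 1), ε (2, 0) + ε (2, 2)} : Set A)).trans
        (by simpa using Finset.card_le_four)
  · rw [hmax, heig]
    exact ⟨(f.disjoint_genEigenspace zero_ne_one ⊤ 1).mono hP hQ, codisjoint_iff.2 hPQ⟩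

/-- Nilpotent Matsuo algebra of the affine plane of order 3 over a field of
characteristic 2: for a line ℓ = {p, p+d, p-d} with parallel lines
m = {p+t, p+t+d, p+t-d} and n = {p-t, p-t+d, p-t-d}, the 0-eigenspace of `ad_{s_ℓ}`
is `span{p, p+d, p-d, s}` (s the sum of all 9 points), the 1-eigenspace is the
4-dimensional span of the sums of two distinct points of m resp. n, the generalized
0-eigenspace is `span{p, p+d, p-d, s_m, s_n}`; in particular `ad_{s_ℓ}` is not
semisimple, and A is the direct sum of the generalized 0-eigenspace and the
1-eigenspace. -/
theorem stmt11 {k A : Type*} [Field k] [NonUnitalNonAssocCommRing A]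
    [Module k A] [SMulCommClass k A A] [IsScalarTower k A A]
    (e : Module.Basis (ZMod 3 × ZMod 3) k A) (hM : IsNilMatsuo k APcol APthird ⇑e)
    (p d t : ZMod 3 × ZMod 3) (hd : d ≠ 0) (ht : t ∉ ({0, d, -d} : Set (ZMod 3 × ZMod 3)))
    (sl sm sn S : A)
    (hsl : sl = e p + e (p + d) + e (p - d))
    (hsm : sm = e (p + t) + e (p + t + d) + e (p + t - d))
    (hsn : sn = e (p - t) + e (p - t + d) + e (p - t - d))
    (hS : S = ∑ w : ZMod 3 × ZMod 3, e w) :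
    Module.End.eigenspace (LinearMap.mulLeft k sl) 0 =
        Submodule.span k {e p, e (p + d), e (p - d), S} ∧
      Module.End.eigenspace (LinearMap.mulLeft k sl) 1 =
        Submodule.span k {e (p + t) + e (p + t + d), e (p + t) + e (p + t - d),
          e (p - t) + e (p - t + d), e (p - t) + e (p - t - d)} ∧
      Module.finrank k (Module.End.eigenspace (LinearMap.mulLeft k sl) 1) = 4 ∧
      Module.End.maxGenEigenspace (LinearMap.mulLeft k sl) 0 =
        Submodule.span k {e p, e (p + d), e (p - d), sm, sn} ∧
      Module.End.maxGenEigenspace (LinearMap.mulLeft k sl) 0 ≠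
        Module.End.eigenspace (LinearMap.mulLeft k sl) 0 ∧
      IsCompl (Module.End.maxGenEigenspace (LinearMap.mulLeft k sl) 0)
        (Module.End.eigenspace (LinearMap.mulLeft k sl) 1) := by
  subst hsl hsm hsn hS
  have hφ := affineFrame_bijective p hd ht
  set ε := e.reindex (Equiv.ofBijective _ hφ).symm
  have hε : ⇑ε = e ∘ affineFrame p t d := by
    rw [Basis.coe_reindex, Equiv.symm_symm]
    rfl
  have key := IsNilMatsuo.eigenspaces_mulLeft_row_zero ε (hε ▸ hM.comp_affineFrame p hd ht)
  have hrow : row ε 0 = e p + e (p + d) + e (p - d) := by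
    simp only [row_eq, hε, comp_apply, affineFrame, zero_smul, one_smul, two_smul_eq_neg,
      add_zero, ← sub_eq_add_neg]
  -- `simp` cannot rewrite `row ε 0` inside the type `↥(eigenspace _ 1)` of the `finrank` claim.
  rw [hrow] at key
  -- The total sum has to be reindexed before `affineFrame` is unfolded.
  simp only [row_eq, hε, comp_apply, hφ.sum_comp] at key
  simp only [affineFrame, zero_smul, one_smul, two_smul_eq_neg, add_zero, ← sub_eq_add_neg] at key
  exact key
end
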